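/- For every m with 1 ≤ 2m−1 ≤ M and every k ≥ 1, the charges satisfy the recursion Q_{2m−1}^{(k)} = Q_{2m−2}^{(k)} + h_{2m−1} Q_{2m−4}^{(k−1)}. -/

import Mathlib

namespace FFD

variable {A : Type*} [Ring A] [Algebra ℂ A]

/-- Index pattern for which the extra generator `ħ_{2m+1}` (with parameter `m`)
anticommutes with the plain generator `h l`. -/
def MixedRel (m l : ℤ) : Prop :=
  l = 2 * m - 5 ∨ l = 2 * m - 3 ∨ l = 2 * m - 1 ∨ l = 2 * m + 1 ∨ l = 2 * m ∨ l = 2 * m + 2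

/-- Vertex codes of the frustration graph: the even code `2 * i` encodes the plain vertex `i`
(generator `h i`), the odd code `2 * m + 1` encodes the barred vertex `2m+1` (generator
`ħ_{2m+1}`).  Two codes are adjacent exactly when the corresponding generators anticommute. -/
def Adj (v w : ℕ) : Prop :=
  if v % 2 = 0 then
    if w % 2 = 0 then
      1 ≤ |((v / 2 : ℕ) : ℤ) - ((w / 2 : ℕ) : ℤ)| ∧
        |((v / 2 : ℕ) : ℤ) - ((w / 2 : ℕ) : ℤ)| ≤ 2
    else MixedRel ((w / 2 : ℕ) : ℤ) ((v / 2 : ℕ) : ℤ)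
  else
    if w % 2 = 0 then MixedRel ((v / 2 : ℕ) : ℤ) ((w / 2 : ℕ) : ℤ)
    else |((v / 2 : ℕ) : ℤ) - ((w / 2 : ℕ) : ℤ)| = 1

/-- The vertex set of the frustration graph `G n`: plain vertices `1, …, n` and barred
vertices `2m+1` for `0 ≤ m ≤ ⌊n/2⌋`. -/
def memG (n v : ℕ) : Prop :=
  if v % 2 = 0 then 1 ≤ v / 2 ∧ v / 2 ≤ n else v / 2 ≤ n / 2

/-- The generator attached to a vertex code. -/
def gen (h hb : ℤ → A) (v : ℕ) : A :=
  if v % 2 = 0 then h ((v / 2 : ℕ) : ℤ) else hb ((v / 2 : ℕ) : ℤ)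

/-- The product `h_S` of the generators of a set of vertex codes, taken in increasing order
of the codes (for an independent set the factors pairwise commute, so the order is
immaterial). -/
def prodGen (h hb : ℤ → A) (S : Finset ℕ) : A :=
  ((S.sort (· ≤ ·)).map (gen h hb)).prod

/-- The finite collection of all independent sets of cardinality `k` of `G n`. -/
noncomputable def indepSets (n k : ℕ) : Finset (Finset ℕ) :=
  @Finset.filter _
    (fun S => S.card = k ∧ (∀ v ∈ S, memG n v) ∧ ∀ v ∈ S, ∀ w ∈ S, v ≠ w → ¬Adj v w)
    (fun _ => Classical.propDecidable _)
    (Finset.range (2 * n + 2)).powerset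

/-- The charge `Q_n^{(k)}`, with the conventions `Q_n^{(0)} = 1`, `Q_n^{(k)} = 0` for `k < 0`,
and `Q_n^{(k)} = 0` for `n < 0`, `k > 0`. -/
noncomputable def Q (h hb : ℤ → A) (n k : ℤ) : A :=
  if k < 0 then 0
  else if n < 0 then (if k = 0 then 1 else 0)
  else ∑ S ∈ indepSets n.toNat k.toNat, prodGen h hb S

/-- The transfer matrix `T_n(u) = ∑_{k ≥ 0} (-u)^k Q_n^{(k)}` (a finite sum, since
`Q_n^{(k)} = 0` whenever `k` exceeds the number of vertices of `G n`), with `T_n(u) = 1`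
for `n ≤ 0`. -/
noncomputable def T (h hb : ℤ → A) (n : ℤ) (u : ℂ) : A :=
  if n ≤ 0 then 1
  else ∑ k ∈ Finset.range (2 * n.toNat + 3), (-u) ^ k • Q h hb n (k : ℤ)

/-- `A_{2m-1} = h_{2m} h_{2m-3} + h_{2m-2} ħ_{2m+1}`. -/
def AOp (h hb : ℤ → A) (m : ℤ) : A :=
  h (2 * m) * h (2 * m - 3) + h (2 * m - 2) * hb m

/-- `C_{2m} = h_{2m-3} ħ_{2m+3}`. -/
def COp (h hb : ℤ → A) (m : ℤ) : A := h (2 * m - 3) * hb (m + 1)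

/-- `𝕊_{2m} = h_{2m-1} + h_{2m} + ħ_{2m+1}`. -/
def SOp (h hb : ℤ → A) (m : ℤ) : A := h (2 * m - 1) + h (2 * m) + hb m

/-- The defining relations of the extended FFD algebra with generators `h_1, …, h_M` and
`ħ_{2m+1} = hb m` for `0 ≤ m ≤ ⌊M/2⌋`. -/
structure FFDHyp (M : ℤ) (h hb : ℤ → A) (b bb : ℤ → ℂ) : Prop where
  hsq : ∀ m, 1 ≤ m → m ≤ M → h m * h m = (b m) ^ 2 • (1 : A)
  hanti : ∀ m l, 1 ≤ m → m ≤ M → 1 ≤ l → l ≤ M → 1 ≤ |m - l| → |m - l| ≤ 2 →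
    h m * h l = -(h l * h m)
  hcomm : ∀ m l, 1 ≤ m → m ≤ M → 1 ≤ l → l ≤ M → 2 < |m - l| →
    h m * h l = h l * h m
  hbsq : ∀ m, 0 ≤ m → m ≤ M / 2 → hb m * hb m = (bb m) ^ 2 • (1 : A)
  hbanti : ∀ m l, 0 ≤ m → m ≤ M / 2 → 1 ≤ l → l ≤ M → MixedRel m l →
    hb m * h l = -(h l * hb m)
  hbcomm : ∀ m l, 0 ≤ m → m ≤ M / 2 → 1 ≤ l → l ≤ M → ¬MixedRel m l →
    hb m * h l = h l * hb m
  hbbanti : ∀ m m', 0 ≤ m → m ≤ M / 2 → 0 ≤ m' → m' ≤ M / 2 → |m - m'| = 1 →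
    hb m * hb m' = -(hb m' * hb m)
  hbbcomm : ∀ m m', 0 ≤ m → m ≤ M / 2 → 0 ≤ m' → m' ≤ M / 2 → m ≠ m' → |m - m'| ≠ 1 →
    hb m * hb m' = hb m' * hb m

/-- The extra relation `A_{2m-1} C_{2m+2} = C_{2m} A_{2m+3}` for all `1 < m < ⌊M/2⌋ - 1`. -/
def ACRel (M : ℤ) (h hb : ℤ → A) : Prop :=
  ∀ m : ℤ, 1 < m → m < M / 2 - 1 →
    AOp h hb m * COp h hb (m + 1) = COp h hb m * AOp h hb (m + 2)

/-- The assumption that the products around the even holes are the scalars `μ_{2m-1}`. -/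
def MuScalar (M : ℤ) (h hb : ℤ → A) (μ : ℤ → ℂ) : Prop :=
  ∀ m : ℤ, 1 < m → m ≤ M / 2 →
    h (2 * m - 3) * h (2 * m) * h (2 * m - 2) * hb m = μ m • (1 : A)

/-- The assumption that `𝕊_{2m}²`, `A_{2m-1}²`, `C_{2m}²` are the scalars `s_{2m}`,
`a_{2m-1}`, `c_{2m}` times the identity, the coefficients attached to generators of
non-positive index being set to zero. -/
structure ScalarSquares (M : ℤ) (h hb : ℤ → A) (s a c : ℤ → ℂ) : Prop where
  hs : ∀ m : ℤ, 1 ≤ m → 2 * m ≤ M → SOp h hb m * SOp h hb m = s (2 * m) • (1 : A)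
  hszero : ∀ m : ℤ, m ≤ 0 → s (2 * m) = 0
  ha : ∀ m : ℤ, 2 ≤ m → 2 * m ≤ M → AOp h hb m * AOp h hb m = a (2 * m - 1) • (1 : A)
  hazero : ∀ m : ℤ, m ≤ 1 → a (2 * m - 1) = 0
  hc : ∀ m : ℤ, 2 ≤ m → 2 * m + 2 ≤ M → COp h hb m * COp h hb m = c (2 * m) • (1 : A)
  hczero : ∀ m : ℤ, m ≤ 1 → c (2 * m) = 0

/-- The explicitly defined polynomial sequence `P_n(z)`:
`P_n = 1` for `n ≤ 0`, `P_{2m-1}(z) = P_{2m-2}(z) - b_{2m-1}² z P_{2m-4}(z)` and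
`P_{2m}(z) = P_{2m-2}(z) - s_{2m} z P_{2m-4}(z) + a_{2m-1} z² P_{2m-6}(z)
- c_{2m-2} z² P_{2m-8}(z)`. -/
structure PolyRec (b s a c : ℤ → ℂ) (P : ℤ → ℂ → ℂ) : Prop where
  base : ∀ n : ℤ, n ≤ 0 → ∀ z : ℂ, P n z = 1
  odd : ∀ m : ℤ, 1 ≤ m → ∀ z : ℂ, P (2 * m - 1) z =
    P (2 * m - 2) z - (b (2 * m - 1)) ^ 2 * z * P (2 * m - 4) z
  even : ∀ m : ℤ, 1 ≤ m → ∀ z : ℂ, P (2 * m) z =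
    P (2 * m - 2) z - s (2 * m) * z * P (2 * m - 4) z
      + a (2 * m - 1) * z ^ 2 * P (2 * m - 6) z
      - c (2 * m - 2) * z ^ 2 * P (2 * m - 8) z

/-- `r_M`: equal to `1` for odd `M` and to `2` for even `M`. -/
def rM (M : ℤ) : ℤ := if M % 2 = 1 then 1 else 2

/-- The sum `𝕊` of the generators of the right-end simplicial clique:
`h_M` for odd `M`, and `h_{M-1} + h_M + ħ_{M+1}` for even `M`. -/
def SEdge (M : ℤ) (h hb : ℤ → A) : A :=
  if M % 2 = 1 then h M else h (M - 1) + h M + hb (M / 2)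

/-- The right-end simplicial mode `χ`: it squares to `1`, anticommutes with the generators
of the right-end simplicial clique and commutes with all the other generators. -/
structure EdgeMode (M : ℤ) (h hb : ℤ → A) (χ : A) : Prop where
  sq : χ * χ = 1
  odd : M % 2 = 1 →
    (χ * h M = -(h M * χ)) ∧
    (∀ l : ℤ, 1 ≤ l → l < M → χ * h l = h l * χ) ∧
    (∀ m : ℤ, 0 ≤ m → m ≤ M / 2 → χ * hb m = hb m * χ)
  even : M % 2 = 0 →
    (χ * h (M - 1) = -(h (M - 1) * χ)) ∧
    (χ * h M = -(h M * χ)) ∧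
    (χ * hb (M / 2) = -(hb (M / 2) * χ)) ∧
    (∀ l : ℤ, 1 ≤ l → l ≤ M - 2 → χ * h l = h l * χ) ∧
    (∀ m : ℤ, 0 ≤ m → m < M / 2 → χ * hb m = hb m * χ)

end FFD

/-!
Split the independent sets of `G_{2m-1}` according to whether they contain the plain vertex
`2m-1`. Those that do not are exactly the independent sets of `G_{2m-2}`, which has the same
barred vertices. The neighbours of `2m-1` in `G_{2m-1}` are `2m-3`, `2m-2` and the barred
`2m-1`, and deleting them together with `2m-1` leaves exactly `G_{2m-4}` (for `m = 1` it leaves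
nothing, matching `Q_{-2}^{(k-1)} = [k = 1]`). So removing `2m-1` is a bijection onto the
independent sets of `G_{2m-4}` of one size less, and since the generators of an independent set
commute, `h_S = h_{2m-1} h_{S \ {2m-1}}`.
-/

namespace FFD

open Function

variable {A : Type*} [Ring A]

lemma memG_iff {n v : ℕ} :
    memG n v ↔ (v % 2 = 0 ∧ 1 ≤ v / 2 ∧ v / 2 ≤ n) ∨ (v % 2 = 1 ∧ v / 2 ≤ n / 2) := by
  unfold memG; split_ifs <;> omega

lemma adj_iff {v w : ℕ} : Adj v w ↔
    (v % 2 = 0 ∧ w % 2 = 0 ∧ 1 ≤ (((v / 2 : ℕ) : ℤ) - (w / 2 : ℕ)).natAbs ∧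
      (((v / 2 : ℕ) : ℤ) - (w / 2 : ℕ)).natAbs ≤ 2) ∨
    (v % 2 = 0 ∧ w % 2 = 1 ∧ MixedRel (w / 2 : ℕ) (v / 2 : ℕ)) ∨
    (v % 2 = 1 ∧ w % 2 = 0 ∧ MixedRel (v / 2 : ℕ) (w / 2 : ℕ)) ∨
    (v % 2 = 1 ∧ w % 2 = 1 ∧ (((v / 2 : ℕ) : ℤ) - (w / 2 : ℕ)).natAbs = 1) := by
  unfold Adj MixedRel
  simp only [Int.abs_eq_natAbs]
  split_ifs <;> omega

lemma adj_comm {v w : ℕ} : Adj v w ↔ Adj w v := by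
  simp only [adj_iff, MixedRel]; omega

instance : Std.Symm (fun v w : ℕ => ¬Adj v w) := ⟨fun _ _ h => adj_comm.not.mp h⟩

lemma memG_pred_iff {n w : ℕ} (hn : n % 2 = 1) :
    memG (n - 1) w ↔ memG n w ∧ w ≠ 2 * n := by
  simp only [memG_iff]; omega

lemma memG_sub_three_iff {n w : ℕ} (hn : n % 2 = 1) (h3 : 3 ≤ n) :
    memG (n - 3) w ↔ memG n w ∧ w ≠ 2 * n ∧ ¬Adj (2 * n) w := by
  simp only [memG_iff, adj_iff, MixedRel]; omega

lemma adj_two_of_memG_one {w : ℕ} (hw : memG 1 w) (hw2 : w ≠ 2) : Adj 2 w := by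
  rw [memG_iff] at hw
  rw [adj_iff]
  unfold MixedRel
  omega

lemma lt_of_memG {n v : ℕ} (hv : memG n v) : v < 2 * n + 2 := by
  rw [memG_iff] at hv; omega

lemma mem_indepSets {n k : ℕ} {S : Finset ℕ} :
    S ∈ indepSets n k ↔
      S.card = k ∧ (∀ v ∈ S, memG n v) ∧ (S : Set ℕ).Pairwise fun v w => ¬Adj v w := by
  simp only [indepSets, Finset.mem_filter, Finset.mem_powerset, Set.Pairwise, Finset.mem_coe,
    and_iff_right_iff_imp]
  exact fun ⟨_, hmem, _⟩ v hv => Finset.mem_range.mpr (lt_of_memG (hmem v hv))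

lemma indepSets_filter_notMem {n k : ℕ} (hn : n % 2 = 1) :
    (indepSets n k).filter (2 * n ∉ ·) = indepSets (n - 1) k := by
  ext S
  simp only [Finset.mem_filter, mem_indepSets, memG_pred_iff hn]
  constructor
  · rintro ⟨⟨hcard, hmem, hind⟩, hnS⟩
    exact ⟨hcard, fun v hv => ⟨hmem v hv, fun he => hnS (he ▸ hv)⟩, hind⟩
  · rintro ⟨hcard, hmem, hind⟩
    exact ⟨⟨hcard, fun v hv => (hmem v hv).1, hind⟩, fun hnS => (hmem _ hnS).2 rfl⟩

lemma insert_mem_indepSets_iff {n k v : ℕ} {S : Finset ℕ} (hv : v ∉ S) :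
    insert v S ∈ indepSets n (k + 1) ↔
      memG n v ∧ S ∈ indepSets n k ∧ ∀ w ∈ S, ¬Adj v w := by
  simp only [mem_indepSets, Finset.card_insert_of_notMem hv, Finset.forall_mem_insert,
    Finset.coe_insert, Set.pairwise_insert_of_symm, Finset.mem_coe, Nat.add_right_cancel_iff]
  constructor
  · rintro ⟨hcard, ⟨hvG, hmem⟩, hind, hadj⟩
    exact ⟨hvG, ⟨hcard, hmem, hind⟩, fun w hw => hadj w hw (fun he => hv (he ▸ hw))⟩
  · rintro ⟨hvG, ⟨hcard, hmem, hind⟩, hadj⟩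
    exact ⟨hcard, ⟨hvG, hmem⟩, hind, fun w hw _ => hadj w hw⟩

lemma mem_indepSets_sub_three_iff {n k : ℕ} {T : Finset ℕ} (hn : n % 2 = 1) (h3 : 3 ≤ n)
    (hT : 2 * n ∉ T) :
    T ∈ indepSets (n - 3) k ↔ T ∈ indepSets n k ∧ ∀ w ∈ T, ¬Adj (2 * n) w := by
  simp only [mem_indepSets, memG_sub_three_iff hn h3]
  constructor
  · rintro ⟨hcard, hmem, hind⟩
    exact ⟨⟨hcard, fun w hw => (hmem w hw).1, hind⟩, fun w hw => (hmem w hw).2.2⟩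
  · rintro ⟨⟨hcard, hmem, hind⟩, hadj⟩
    exact ⟨hcard, fun w hw => ⟨hmem w hw, fun he => hT (he ▸ hw), hadj w hw⟩, hind⟩

lemma indepSets_filter_mem {n k : ℕ} (hn : n % 2 = 1) (h3 : 3 ≤ n) :
    (indepSets n (k + 1)).filter (2 * n ∈ ·) = (indepSets (n - 3) k).image (insert (2 * n)) := by
  ext S
  simp only [Finset.mem_filter, Finset.mem_image]
  constructor
  · rintro ⟨hS, hnS⟩
    have hnS' := Finset.notMem_erase (2 * n) S
    rw [← Finset.insert_erase hnS, insert_mem_indepSets_iff hnS'] at hS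
    exact ⟨_, (mem_indepSets_sub_three_iff hn h3 hnS').mpr hS.2, Finset.insert_erase hnS⟩
  · rintro ⟨T, hT, rfl⟩
    have hnT : 2 * n ∉ T := fun h => by
      have := lt_of_memG ((mem_indepSets.mp hT).2.1 _ h); omega
    refine ⟨(insert_mem_indepSets_iff hnT).mpr ⟨?_, (mem_indepSets_sub_three_iff hn h3 hnT).mp hT⟩,
      Finset.mem_insert_self _ _⟩
    rw [memG_iff]; omega

lemma indepSets_one_filter_mem {k : ℕ} :
    (indepSets 1 (k + 1)).filter (2 ∈ ·) = if k = 0 then {{2}} else ∅ := by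
  ext S
  simp only [Finset.mem_filter]
  constructor
  · rintro ⟨hS, h2S⟩
    have h2S' := Finset.notMem_erase 2 S
    rw [← Finset.insert_erase h2S, insert_mem_indepSets_iff h2S'] at hS
    obtain ⟨-, hT, hadj⟩ := hS
    have hempty : S.erase 2 = ∅ := Finset.eq_empty_of_forall_notMem fun w hw =>
      hadj w hw (adj_two_of_memG_one ((mem_indepSets.mp hT).2.1 w hw) (Finset.ne_of_mem_erase hw))
    rw [hempty, mem_indepSets, Finset.card_empty] at hT
    rw [if_pos hT.1.symm, Finset.mem_singleton, ← Finset.insert_erase h2S, hempty]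
    rfl
  · split_ifs with hk
    · rw [Finset.mem_singleton]
      rintro rfl
      subst hk
      refine ⟨(insert_mem_indepSets_iff (Finset.notMem_empty 2)).mpr ⟨?_, ?_, by simp⟩,
        Finset.mem_singleton_self 2⟩
      · rw [memG_iff]; omega
      · simp [mem_indepSets]
    · simp

lemma prodGen_eq_noncommProd {h hb : ℤ → A} {S : Finset ℕ}
    (comm : (S : Set ℕ).Pairwise (Commute on gen h hb)) :
    prodGen h hb S = S.noncommProd (gen h hb) comm := by
  rw [prodGen, Finset.noncommProd, ← Multiset.noncommProd_coe]
  · congr 1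
    rw [← Multiset.map_coe, Finset.sort_eq]
  · simpa only [← Multiset.map_coe, Finset.sort_eq] using Finset.noncommProd_lemma S _ comm

lemma prodGen_insert {h hb : ℤ → A} {v : ℕ} {S : Finset ℕ} (hv : v ∉ S)
    (comm : ((insert v S : Finset ℕ) : Set ℕ).Pairwise (Commute on gen h hb)) :
    prodGen h hb (insert v S) = gen h hb v * prodGen h hb S := by
  rw [prodGen_eq_noncommProd comm, Finset.noncommProd_insert_of_notMem _ _ _ _ hv,
    prodGen_eq_noncommProd]

lemma commute_gen_of_not_adj [Algebra ℂ A] {M : ℤ} {h hb : ℤ → A} {b bb : ℤ → ℂ}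
    (hyp : FFDHyp M h hb b bb) {n v w : ℕ} (hnM : (n : ℤ) ≤ M) (hv : memG n v) (hw : memG n w)
    (hvw : ¬Adj v w) : Commute (gen h hb v) (gen h hb w) := by
  rw [memG_iff] at hv hw
  rw [adj_iff] at hvw
  rcases Nat.mod_two_eq_zero_or_one v with hv2 | hv2 <;>
    rcases Nat.mod_two_eq_zero_or_one w with hw2 | hw2 <;>
    simp only [gen, hv2, hw2, one_ne_zero, if_true, if_false]
  · by_cases hvw' : v = w
    · rw [hvw']
    refine hyp.hcomm _ _ (by omega) (by omega) (by omega) (by omega) ?_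
    rw [Int.abs_eq_natAbs]
    omega
  · exact (hyp.hbcomm _ _ (by omega) (by omega) (by omega) (by omega)
      fun hm => hvw (Or.inr (Or.inl ⟨hv2, hw2, hm⟩))).symm
  · exact hyp.hbcomm _ _ (by omega) (by omega) (by omega) (by omega)
      fun hm => hvw (Or.inr (Or.inr (Or.inl ⟨hv2, hw2, hm⟩)))
  · by_cases hvw' : v = w
    · rw [hvw']
    refine hyp.hbbcomm _ _ (by omega) (by omega) (by omega) (by omega) (by omega) ?_
    rw [Int.abs_eq_natAbs]
    omega

lemma prodGen_insert_of_mem_indepSets [Algebra ℂ A] {M : ℤ} {h hb : ℤ → A} {b bb : ℤ → ℂ}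
    (hyp : FFDHyp M h hb b bb) {n k v : ℕ} {S : Finset ℕ} (hnM : (n : ℤ) ≤ M) (hv : v ∉ S)
    (hS : insert v S ∈ indepSets n k) :
    prodGen h hb (insert v S) = gen h hb v * prodGen h hb S := by
  obtain ⟨-, hmem, hind⟩ := mem_indepSets.mp hS
  exact prodGen_insert hv fun x hx y hy hxy =>
    commute_gen_of_not_adj hyp hnM (hmem x hx) (hmem y hy) (hind hx hy hxy)

lemma Q_natCast (h hb : ℤ → A) (n k : ℕ) :
    Q h hb n k = ∑ S ∈ indepSets n k, prodGen h hb S := by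
  rw [Q, if_neg (by omega), if_neg (by omega), Int.toNat_natCast, Int.toNat_natCast]

lemma two_mul_notMem_of_mem_indepSets {m n k : ℕ} {T : Finset ℕ} (hT : T ∈ indepSets m k)
    (hmn : m < n) : 2 * n ∉ T := fun h2n => by
  have := lt_of_memG ((mem_indepSets.mp hT).2.1 _ h2n)
  omega

lemma sum_indepSets_filter_mem [Algebra ℂ A] {M : ℤ} {h hb : ℤ → A} {b bb : ℤ → ℂ}
    (hyp : FFDHyp M h hb b bb) {n : ℕ} (hn : n % 2 = 1) (hnM : (n : ℤ) ≤ M) (k : ℕ) :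
    ∑ S ∈ (indepSets n (k + 1)).filter (2 * n ∈ ·), prodGen h hb S =
      h n * Q h hb (n - 3) k := by
  rcases (by omega : n = 1 ∨ 3 ≤ n) with rfl | h3
  · rw [indepSets_one_filter_mem]
    cases k <;> simp [Q, prodGen, gen, Nat.cast_add_one_ne_zero]
  have hnT : ∀ T ∈ indepSets (n - 3) k, 2 * n ∉ T := fun T hT =>
    two_mul_notMem_of_mem_indepSets hT (by omega)
  have hinj : Set.InjOn (insert (2 * n)) (indepSets (n - 3) k : Set (Finset ℕ)) :=
    fun x hx y hy hxy => by
      rw [← Finset.erase_insert (hnT x hx), hxy, Finset.erase_insert (hnT y hy)]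
  rw [indepSets_filter_mem hn h3, Finset.sum_image hinj, show (n : ℤ) - 3 = (n - 3 : ℕ) by omega,
    Q_natCast, Finset.mul_sum]
  refine Finset.sum_congr rfl fun T hT => ?_
  have hins := (indepSets_filter_mem hn h3 ▸ Finset.mem_image_of_mem (insert (2 * n)) hT)
  rw [prodGen_insert_of_mem_indepSets hyp hnM (hnT T hT) (Finset.mem_filter.mp hins).1]
  simp [gen]

theorem charge_recursion_odd_general
    {A : Type*} [Ring A] [Algebra ℂ A]
    (M : ℤ) (h hb : ℤ → A) (b bb : ℤ → ℂ)
    (hyp : FFDHyp M h hb b bb) :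
    ∀ m k : ℤ, 1 ≤ 2 * m - 1 → 2 * m - 1 ≤ M → 1 ≤ k →
      Q h hb (2 * m - 1) k =
        Q h hb (2 * m - 2) k + h (2 * m - 1) * Q h hb (2 * m - 4) (k - 1) := by
  intro m k hm hmM hk
  obtain ⟨n, hn⟩ : ∃ n : ℕ, (n : ℤ) = 2 * m - 1 := ⟨(2 * m - 1).toNat, by omega⟩
  obtain ⟨k, rfl⟩ : ∃ k' : ℕ, k = k' + 1 := ⟨(k - 1).toNat, by omega⟩
  have hodd : n % 2 = 1 := by omega
  rw [← hn, show 2 * m - 2 = (n - 1 : ℕ) by omega, show 2 * m - 4 = (n : ℤ) - 3 by omega,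
    add_sub_cancel_right, ← Nat.cast_succ, Q_natCast, Q_natCast,
    ← sum_indepSets_filter_mem hyp hodd (by omega), ← indepSets_filter_notMem hodd]
  exact (Finset.sum_filter_not_add_sum_filter _ _ _).symm

/-- The odd-index recursion for the charges:
`Q_{2m-1}^{(k)} = Q_{2m-2}^{(k)} + h_{2m-1} Q_{2m-4}^{(k-1)}`. -/
theorem charge_recursion_odd
    {A : Type*} [Ring A] [Algebra ℂ A]
    (M : ℤ) (hM : 4 ≤ M) (h hb : ℤ → A) (b bb : ℤ → ℂ)
    (hyp : FFDHyp M h hb b bb) :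
    ∀ m k : ℤ, 1 ≤ 2 * m - 1 → 2 * m - 1 ≤ M → 1 ≤ k →
      Q h hb (2 * m - 1) k =
        Q h hb (2 * m - 2) k + h (2 * m - 1) * Q h hb (2 * m - 4) (k - 1) :=
  charge_recursion_odd_general M h hb b bb hyp

end FFD
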